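/- arXiv:2603.01776 — 2 statements merged into one kernel-verified Lean document; each statement's English description precedes it below -/
import Mathlib

section
/- Let A be an m×n real matrix, B a p×q real matrix, and C an m×q real matrix. Suppose G satisfies A·G·A = A and H satisfies B·H·B = B, and suppose A·G·C·H·B = C. Then the full solution set of the equation A·X·B = C is exactly { G·C·H + Z − G·A·Z·B·H : Z an arbitrary n×p real matrix }; that is, every matrix of this form solves the equation, and every solution is of this form. -/
open Matrix

/-! The map `Z ↦ Z - G A Z B H` sends every matrix to a solution of the homogeneous equation
`A X B = 0`, because `A G A = A` and `B H B = B` absorb the outer factors; and `G C H` is a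
particular solution by the consistency condition. Conversely a solution `X` is recovered with
`Z = X`, since then `G A X B H = G C H`. -/

namespace Matrix

variable {R : Type*} [Ring R] {m n p q : Type*} [Fintype m] [Fintype n] [Fintype p] [Fintype q]

theorem mul_sub_genInv_mul_mul_eq_zero {A : Matrix m n R} {B : Matrix p q R}
    {G : Matrix n m R} {H : Matrix q p R} (hG : A * G * A = A) (hH : B * H * B = B)
    (Z : Matrix n p R) : A * (Z - G * A * Z * B * H) * B = 0 := by
  have hAZB : A * (G * A * Z * B * H) * B = A * Z * B := by
    calc A * (G * A * Z * B * H) * B = (A * G * A) * Z * (B * H * B) := by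
          simp only [Matrix.mul_assoc]
      _ = A * Z * B := by rw [hG, hH]
  rw [Matrix.mul_sub, Matrix.sub_mul, hAZB, sub_self]

theorem mul_genInv_mul_mul_eq {A : Matrix m n R} {B : Matrix p q R} {C : Matrix m q R}
    {G : Matrix n m R} {H : Matrix q p R} (hC : A * G * C * H * B = C) :
    A * (G * C * H) * B = C := by
  simpa only [Matrix.mul_assoc] using hC

theorem genInv_mul_mul_eq_of_mul_mul_eq {A : Matrix m n R} {B : Matrix p q R}
    {C : Matrix m q R} {G : Matrix n m R} {H : Matrix q p R} {X : Matrix n p R}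
    (hX : A * X * B = C) : G * A * X * B * H = G * C * H := by
  rw [← hX]
  simp only [Matrix.mul_assoc]

end Matrix

/-- General-solution statement of Penrose's lemma: if A·G·A = A, B·H·B = B and
A·G·C·H·B = C, then the solution set of A·X·B = C is exactly
{ G·C·H + Z − G·A·Z·B·H : Z arbitrary }. -/
theorem penrose_general_solution {m n p q : ℕ}
    (A : Matrix (Fin m) (Fin n) ℝ) (B : Matrix (Fin p) (Fin q) ℝ)
    (C : Matrix (Fin m) (Fin q) ℝ)
    (G : Matrix (Fin n) (Fin m) ℝ) (H : Matrix (Fin q) (Fin p) ℝ)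
    (hG : A * G * A = A) (hH : B * H * B = B)
    (hC : A * G * C * H * B = C) :
    {X : Matrix (Fin n) (Fin p) ℝ | A * X * B = C} =
      {X : Matrix (Fin n) (Fin p) ℝ |
        ∃ Z : Matrix (Fin n) (Fin p) ℝ, X = G * C * H + Z - G * A * Z * B * H} := by
  ext X
  constructor
  · intro hX
    refine ⟨X, ?_⟩
    rw [genInv_mul_mul_eq_of_mul_mul_eq hX]
    abel
  · rintro ⟨Z, rfl⟩
    show A * (G * C * H + Z - G * A * Z * B * H) * B = C
    rw [add_sub_assoc, Matrix.mul_add, Matrix.add_mul, mul_genInv_mul_mul_eq hC,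
      mul_sub_genInv_mul_mul_eq_zero hG hH, add_zero]
end

section
/- Let X be an n×d real matrix, W an m×d real matrix, and let P_X and P_W be d×d real matrices satisfying X·P_X = X and P_W·Wᵀ = Wᵀ. Then for every d×d real matrix Z, the matrix M := Z − P_X·(Z − I)·P_W satisfies X·M·Wᵀ = X·Wᵀ. -/
open Matrix

theorem Matrix.mul_mul_mul_mul_eq_of_mul_eq {ι κ ν μ R : Type*} [Fintype κ] [Fintype ν]
    [NonUnitalSemiring R] (X : Matrix ι κ R) (P : Matrix κ κ R) (A : Matrix κ ν R)
    (Q : Matrix ν ν R) (Y : Matrix ν μ R) (hX : X * P = X) (hY : Q * Y = Y) :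
    X * (P * A * Q) * Y = X * A * Y := by
  simp only [Matrix.mul_assoc]
  rw [hY, ← Matrix.mul_assoc X P, hX]

/-- Forward direction of Proposition 1 (Beyond the Inverse): if X·P_X = X and
P_W·Wᵀ = Wᵀ, then for every Z the matrix M := Z − P_X·(Z − I)·P_W satisfies
X·M·Wᵀ = X·Wᵀ. -/
theorem beyond_inverse_forward {n m d : ℕ}
    (X : Matrix (Fin n) (Fin d) ℝ) (W : Matrix (Fin m) (Fin d) ℝ)
    (PX PW : Matrix (Fin d) (Fin d) ℝ)
    (hX : X * PX = X) (hW : PW * Wᵀ = Wᵀ) :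
    ∀ Z : Matrix (Fin d) (Fin d) ℝ,
      X * (Z - PX * (Z - 1) * PW) * Wᵀ = X * Wᵀ := by
  intro Z
  calc X * (Z - PX * (Z - 1) * PW) * Wᵀ
      = X * Z * Wᵀ - X * (PX * (Z - 1) * PW) * Wᵀ := by rw [Matrix.mul_sub, Matrix.sub_mul]
    _ = X * Z * Wᵀ - X * (Z - 1) * Wᵀ := by
      rw [Matrix.mul_mul_mul_mul_eq_of_mul_eq X PX (Z - 1) PW Wᵀ hX hW]
    _ = X * Wᵀ := by rw [← Matrix.sub_mul, ← Matrix.mul_sub, sub_sub_cancel, Matrix.mul_one]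
end
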